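/- Assume conditions S1* and S2* hold and that regime (α) holds. Then the lifetime value function evaluated at x* satisfies V̂(x*) = max_{z∈(a,x*)} y(z), where y(z) := (−z + p_c + K_c·ψ_r(z)/ψ_r(x*)) / (φ_r(z)/φ_r(x*) − A·ψ_r(z)/ψ_r(x*)). -/

import Mathlib

/-!
Stopping at the hitting time `τ_z` of a level `z < x*` pays `h(z)·φ(x*)/φ(z)` and restarts the
lifetime problem at `x*` with weight `w(z) = A·(ψ(z)/ψ(x*))·(φ(x*)/φ(z))`; iterating, `V̂(x*)` is at
least the fixed point `y(z)` of `t ↦ h(z)·φ(x*)/φ(z) + w(z)·t`. Conversely, if `y ≤ σ` on `(a,x*)`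
with `σ ≥ 0`, then `σ·φ/φ(x*)` dominates every payoff `ĥ` and is `r`-excessive, so `V̂(x*) ≤ σ`.
Hence `V̂(x*) = sup y`. The single option value satisfies `V_c(x*) ≥ y(z)·(1 - w(z))` with
`w(z) → 0` as `z → a`, so a supremum approached only at `a` would be at most `V_c(x*)`, which
regime (α) excludes. As `y` is continuous on `(a,x*]` and `y(x*) < 0 ≤ V_c(x*) < sup y`, the
supremum is a maximum attained in `(a,x*)`.
-/

open Filter Set Topology

noncomputable section

/-- The filter of real numbers tending to the (possibly infinite) boundary point `a ∈ [-∞,∞]`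
from the right, i.e. "x → a, x > a". -/
def fromRight (a : EReal) : Filter ℝ :=
  Filter.comap (fun x : ℝ => (x : EReal)) (nhdsWithin a (Set.Ioi a))

/-- The filter of real numbers tending to the boundary point `b` from the left. -/
def fromLeft (b : EReal) : Filter ℝ :=
  Filter.comap (fun x : ℝ => (x : EReal)) (nhdsWithin b (Set.Iio b))

/-- An abstract setup for optimal stopping of a regular one-dimensional diffusion
`X` on the interval `I = (a,b)` with natural boundaries, discount rate `r`, and
fundamental `r`-excessive functions `ψ_r` (increasing) and `φ_r` (decreasing).

`Stop` is the collection of stopping times of `X`; for a stopping time `τ`,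
`E x τ ϑ` denotes the expected discounted reward `E^x[e^{-rτ} ϑ(X_τ) 1_{τ<∞}]`,
`P x τ S` denotes the probability `ℙ^x(X_τ ∈ S, τ < ∞)`, `hit y` is the first
hitting time `τ_y = inf{t ≥ 0 : X_t = y}`, and `never` is the stopping time `τ ≡ ∞`. -/
structure Setup where
  a : EReal
  b : EReal
  hab : a < b
  r : ℝ
  hr : 0 < r
  psi : ℝ → ℝ
  phi : ℝ → ℝ
  Stop : Type
  never : Stop
  hit : ℝ → Stop
  E : ℝ → Stop → (ℝ → EReal) → EReal
  P : ℝ → Stop → Set ℝ → ENNReal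
  psi_pos : ∀ ⦃x : ℝ⦄, a < ↑x → ↑x < b → 0 < psi x
  phi_pos : ∀ ⦃x : ℝ⦄, a < ↑x → ↑x < b → 0 < phi x
  psi_cont : ContinuousOn psi {x : ℝ | a < ↑x ∧ ↑x < b}
  phi_cont : ContinuousOn phi {x : ℝ | a < ↑x ∧ ↑x < b}
  psi_mono : StrictMonoOn psi {x : ℝ | a < ↑x ∧ ↑x < b}
  phi_anti : StrictAntiOn phi {x : ℝ | a < ↑x ∧ ↑x < b}
  psi_lim_a : Filter.Tendsto psi (fromRight a) (nhds 0)
  psi_lim_b : Filter.Tendsto psi (fromLeft b) Filter.atTop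
  phi_lim_b : Filter.Tendsto phi (fromLeft b) (nhds 0)
  phi_lim_a : Filter.Tendsto phi (fromRight a) Filter.atTop
  psi_excessive : ∀ ⦃x : ℝ⦄, a < ↑x → ↑x < b → ∀ τ : Stop,
    E x τ (fun s => ((psi s : ℝ) : EReal)) ≤ ((psi x : ℝ) : EReal)
  phi_excessive : ∀ ⦃x : ℝ⦄, a < ↑x → ↑x < b → ∀ τ : Stop,
    E x τ (fun s => ((phi s : ℝ) : EReal)) ≤ ((phi x : ℝ) : EReal)
  E_never : ∀ (x : ℝ) (ϑ : ℝ → EReal), E x never ϑ = 0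
  E_mono : ∀ (x : ℝ) (τ : Stop) (ϑ ϑ' : ℝ → EReal),
    (∀ s : ℝ, a < ↑s → ↑s < b → ϑ s ≤ ϑ' s) → E x τ ϑ ≤ E x τ ϑ'
  E_smul : ∀ (x : ℝ) (τ : Stop) (c : ℝ) (ϑ : ℝ → EReal), 0 ≤ c →
    E x τ (fun s => (c : EReal) * ϑ s) = (c : EReal) * E x τ ϑ
  E_hit_lt : ∀ ⦃x y : ℝ⦄, a < ↑x → ↑y < b → x < y → ∀ ϑ : ℝ → EReal,
    E x (hit y) ϑ = ϑ y * ((psi x / psi y : ℝ) : EReal)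
  E_hit_ge : ∀ ⦃x y : ℝ⦄, a < ↑y → ↑x < b → y ≤ x → ∀ ϑ : ℝ → EReal,
    E x (hit y) ϑ = ϑ y * ((phi x / phi y : ℝ) : EReal)
  regular : ∀ ⦃x y : ℝ⦄, a < ↑x → ↑x < b → a < ↑y → ↑y < b →
    0 < P x (hit y) Set.univ

/-- Embedding of a real-valued payoff into `EReal`. -/
def toE (ϑ : ℝ → ℝ) : ℝ → EReal := fun s => ((ϑ s : ℝ) : EReal)

namespace Setup
variable (S : Setup)

/-- The state space `I = (a,b)`. -/
def I : Set ℝ := {x : ℝ | S.a < ↑x ∧ ↑x < S.b}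

/-- The value function `v(x) = sup_τ E^x[e^{-rτ} ϑ(X_τ) 1_{τ<∞}]`. -/
def val (ϑ : ℝ → EReal) (x : ℝ) : EReal := ⨆ τ : S.Stop, S.E x τ ϑ

/-- A stopping time `τ` is optimal for the problem `v(x)` if it attains the supremum. -/
def IsOptimal (ϑ : ℝ → EReal) (x : ℝ) (τ : S.Stop) : Prop :=
  S.E x τ ϑ = S.val ϑ x

/-- `L_c = limsup_{x→a} (−x)/φ_r(x)`. -/
def Lc : EReal := Filter.limsup (fun x : ℝ => ((-x / S.phi x : ℝ) : EReal)) (fromRight S.a)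

end Setup

/-- The single option payoff `h(x) = -x + p_c + K_c·ψ_r(x)/ψ_r(x*)` for `x < x*` and
`h(x) = -x + p_c + K_c` for `x ≥ x*`. -/
def hpay (S : Setup) (pc Kc xstar : ℝ) (x : ℝ) : ℝ :=
  if x < xstar then -x + pc + Kc * (S.psi x / S.psi xstar) else -x + pc + Kc

/-- Case A: `L_c ≤ h(x)/φ_r(x)` for some `x ∈ I`. -/
def caseA (S : Setup) (pc Kc xstar : ℝ) : Prop :=
  ∃ x ∈ S.I, S.Lc ≤ ((hpay S pc Kc xstar x / S.phi x : ℝ) : EReal)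

/-- Case B: `∞ > L_c > h(x)/φ_r(x)` for all `x ∈ I`. -/
def caseB (S : Setup) (pc Kc xstar : ℝ) : Prop :=
  S.Lc ≠ ⊤ ∧ ∀ x ∈ S.I, ((hpay S pc Kc xstar x / S.phi x : ℝ) : EReal) < S.Lc

/-- Case C: `L_c = ∞`. -/
def caseC (S : Setup) : Prop := S.Lc = ⊤

/-- The payoff `ĥ(x,ζ̂)` of the normalised lifetime problem with continuation value `ζ̂`:
`ĥ(x,ζ̂) = −x + p_c + (K_c + A·ζ̂(x*))·ψ_r(x)/ψ_r(x*)` for `x < x*`, and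
`ĥ(x,ζ̂) = −x + p_c + K_c + A·ζ̂(x)` for `x ≥ x*`. -/
def hhat (S : Setup) (pc Kc xstar A : ℝ) (ζ : ℝ → EReal) (x : ℝ) : EReal :=
  if x < xstar then
    ((-x + pc : ℝ) : EReal)
      + ((S.psi x / S.psi xstar : ℝ) : EReal) * (((Kc : ℝ) : EReal) + ((A : ℝ) : EReal) * ζ xstar)
  else ((-x + pc + Kc : ℝ) : EReal) + ((A : ℝ) : EReal) * ζ x

/-- The normalised optimal stopping operator `T̂ζ̂(x) = sup_τ E^x[e^{−rτ} ĥ(X_τ,ζ̂) 1_{τ<∞}]`. -/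
def That (S : Setup) (pc Kc xstar A : ℝ) (ζ : ℝ → EReal) : ℝ → EReal :=
  fun x => ⨆ τ : S.Stop, S.E x τ (hhat S pc Kc xstar A ζ)

/-- The iterate `T̂ⁿ0`. -/
def ThatIter (S : Setup) (pc Kc xstar A : ℝ) (n : ℕ) : ℝ → EReal :=
  (That S pc Kc xstar A)^[n] (fun _ => 0)

/-- The lifetime value function `V̂(x) = lim_{n→∞} T̂ⁿ0(x)`; since the iterates are monotone
in `n`, the limit is the (pointwise monotone) supremum. -/
def Vhat (S : Setup) (pc Kc xstar A : ℝ) (x : ℝ) : EReal :=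
  ⨆ n : ℕ, ThatIter S pc Kc xstar A n x

/-- An admissible continuation value: (real-valued) nonnegative on `I`, continuous on
`(a,x*]`, with `ζ̂/φ_r` nonincreasing on `[x*,b)`. -/
def Admissible (S : Setup) (xstar : ℝ) (ζ : ℝ → EReal) : Prop :=
  (∀ x ∈ S.I, 0 ≤ ζ x ∧ ζ x ≠ ⊤) ∧
  ContinuousOn ζ {x : ℝ | S.a < ↑x ∧ x ≤ xstar} ∧
  AntitoneOn (fun x => ζ x / ((S.phi x : ℝ) : EReal)) {x : ℝ | xstar ≤ x ∧ ↑x < S.b}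

/-- Regime (α): the lifetime value strictly dominates the single option value on `[x*,b)`. -/
def regimeAlpha (S : Setup) (pc Kc xstar A : ℝ) : Prop :=
  ∀ x ∈ S.I, xstar ≤ x →
    S.val (toE (hpay S pc Kc xstar)) x < Vhat S pc Kc xstar A x

/-- Regime (β): the lifetime value equals the single option value on `[x*,b)`
(including the case that both are infinite). -/
def regimeBeta (S : Setup) (pc Kc xstar A : ℝ) : Prop :=
  ∀ x ∈ S.I, xstar ≤ x →
    Vhat S pc Kc xstar A x = S.val (toE (hpay S pc Kc xstar)) x

/-- The objective in the one-dimensional search for the lifetime value: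
`y(z) = (−z + p_c + K_c·ψ_r(z)/ψ_r(x*)) / (φ_r(z)/φ_r(x*) − A·ψ_r(z)/ψ_r(x*))`. -/
def yObj (S : Setup) (pc Kc xstar A : ℝ) (z : ℝ) : ℝ :=
  (-z + pc + Kc * (S.psi z / S.psi xstar))
    / (S.phi z / S.phi xstar - A * (S.psi z / S.psi xstar))

section Boundary

variable {a : EReal}

lemma exists_forall_mem_of_mem_fromRight {s : Set ℝ} (hs : s ∈ fromRight a) {x : ℝ}
    (hx : a < x) : ∃ c : ℝ, a < c ∧ c ≤ x ∧ ∀ z : ℝ, a < z → z < c → z ∈ s := by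
  obtain ⟨t, ht, hts⟩ := Filter.mem_comap.mp hs
  obtain ⟨v, hav, hvt⟩ := (mem_nhdsGT_iff_exists_Ioo_subset' hx).mp ht
  obtain ⟨c, hac, hcv⟩ := EReal.lt_iff_exists_real_btwn.mp (lt_min hav hx)
  refine ⟨c, hac, EReal.coe_le_coe_iff.mp (hcv.le.trans (min_le_right _ _)),
    fun z haz hzc => hts (hvt ⟨haz, ?_⟩)⟩
  exact (EReal.coe_lt_coe_iff.mpr hzc).trans_le (hcv.le.trans (min_le_left _ _))

lemma eventually_mem_Ioo_fromRight {x : ℝ} (hx : a < x) :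
    ∀ᶠ z : ℝ in fromRight a, a < z ∧ z < x := by
  have h : Ioi a ∩ Iio (x : EReal) ∈ 𝓝[>] a :=
    inter_mem self_mem_nhdsWithin (mem_nhdsWithin_of_mem_nhds (Iio_mem_nhds hx))
  filter_upwards [Filter.preimage_mem_comap h] with z hz
  exact ⟨hz.1, EReal.coe_lt_coe_iff.mp hz.2⟩

lemma exists_isMaxOn_of_eventually_le_fromRight {f : ℝ → ℝ} {b r : ℝ}
    (hf : ContinuousOn f {z : ℝ | a < z ∧ z ≤ b}) (hev : ∀ᶠ z in fromRight a, f z ≤ r)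
    {z' : ℝ} (hz' : a < z') (hz'b : z' ≤ b) (hr : r < f z') :
    ∃ z₀ ∈ {z : ℝ | a < z ∧ z ≤ b}, IsMaxOn f {z : ℝ | a < z ∧ z ≤ b} z₀ := by
  obtain ⟨c, hac, hcz', hc⟩ := exists_forall_mem_of_mem_fromRight hev hz'
  have hsub : Icc c b ⊆ {z : ℝ | a < z ∧ z ≤ b} :=
    fun z hz => ⟨hac.trans_le (EReal.coe_le_coe_iff.mpr hz.1), hz.2⟩
  obtain ⟨z₀, hz₀, hmax⟩ :=
    isCompact_Icc.exists_isMaxOn (nonempty_Icc.mpr (hcz'.trans hz'b)) (hf.mono hsub)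
  refine ⟨z₀, hsub hz₀, isMaxOn_iff.mpr fun z hz => ?_⟩
  rcases lt_or_ge z c with hzc | hcz
  · exact (hc z hz.1 hzc).trans (hr.trans_le (isMaxOn_iff.mp hmax z' ⟨hcz', hz'b⟩)).le
  · exact isMaxOn_iff.mp hmax z ⟨hcz, hz.2⟩

end Boundary

namespace Setup

variable (S : Setup)

lemma mem_I_of_le {x z : ℝ} (hx : x ∈ S.I) (hz : S.a < z) (hzx : z ≤ x) : z ∈ S.I :=
  ⟨hz, (EReal.coe_le_coe_iff.mpr hzx).trans_lt hx.2⟩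

lemma psi_div_mem_Ioc {x z : ℝ} (hz : z ∈ S.I) (hx : x ∈ S.I) (hzx : z ≤ x) :
    S.psi z / S.psi x ∈ Ioc 0 1 :=
  ⟨div_pos (S.psi_pos hz.1 hz.2) (S.psi_pos hx.1 hx.2),
    div_le_one_of_le₀ (S.psi_mono.monotoneOn hz hx hzx) (S.psi_pos hx.1 hx.2).le⟩

lemma phi_div_mem_Ioc {x z : ℝ} (hz : z ∈ S.I) (hx : x ∈ S.I) (hzx : z ≤ x) :
    S.phi x / S.phi z ∈ Ioc 0 1 :=
  ⟨div_pos (S.phi_pos hx.1 hx.2) (S.phi_pos hz.1 hz.2),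
    div_le_one_of_le₀ (S.phi_anti.antitoneOn hz hx hzx) (S.phi_pos hz.1 hz.2).le⟩

lemma val_nonneg (ϑ : ℝ → EReal) (x : ℝ) : 0 ≤ S.val ϑ x :=
  (S.E_never x ϑ).symm.le.trans (le_iSup (fun τ => S.E x τ ϑ) S.never)

lemma mul_phi_div_le_val (ϑ : ℝ → EReal) {x z : ℝ} (hz : S.a < z) (hx : (x : EReal) < S.b)
    (hzx : z ≤ x) : ϑ z * ((S.phi x / S.phi z : ℝ) : EReal) ≤ S.val ϑ x :=
  (S.E_hit_ge hz hx hzx ϑ).symm.le.trans (le_iSup (fun τ => S.E x τ ϑ) (S.hit z))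

lemma val_le_mul_phi {ϑ : ℝ → EReal} {c : ℝ} (hc : 0 ≤ c)
    (hϑ : ∀ s ∈ S.I, ϑ s ≤ ((c * S.phi s : ℝ) : EReal)) {x : ℝ} (hx : x ∈ S.I) :
    S.val ϑ x ≤ ((c * S.phi x : ℝ) : EReal) := by
  refine iSup_le fun τ => ?_
  calc S.E x τ ϑ ≤ S.E x τ (fun s => (c : EReal) * toE S.phi s) :=
        S.E_mono x τ _ _ fun s hs₁ hs₂ => (hϑ s ⟨hs₁, hs₂⟩).trans_eq (EReal.coe_mul _ _)
    _ = (c : EReal) * S.E x τ (toE S.phi) := S.E_smul x τ c _ hc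
    _ ≤ (c : EReal) * (S.phi x : EReal) :=
        mul_le_mul_of_nonneg_left (S.phi_excessive hx.1 hx.2 τ) (EReal.coe_nonneg.mpr hc)
    _ = ((c * S.phi x : ℝ) : EReal) := (EReal.coe_mul _ _).symm

end Setup

/-- `φ(x*)/φ(z) = E^{x*}[e^{-rτ_z}]` and `ψ(z)/ψ(x*) = E^z[e^{-rτ_{x*}}]`: the discount over the
round trip `x* → z → x*`, degraded by `A`. -/
def roundTripFactor (S : Setup) (xstar A z : ℝ) : ℝ :=
  A * (S.psi z / S.psi xstar) * (S.phi xstar / S.phi z)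

section LifetimeValue

variable {S : Setup} {pc Kc xstar A : ℝ}

lemma roundTripFactor_mem_Icc (hx : xstar ∈ S.I) (hA0 : 0 ≤ A) {z : ℝ} (hz : S.a < z)
    (hzx : z ≤ xstar) : roundTripFactor S xstar A z ∈ Icc 0 A := by
  have hzI := S.mem_I_of_le hx hz hzx
  obtain ⟨hv0, hv1⟩ := S.psi_div_mem_Ioc hzI hx hzx
  obtain ⟨hq0, hq1⟩ := S.phi_div_mem_Ioc hzI hx hzx
  refine ⟨by unfold roundTripFactor; positivity, ?_⟩
  calc roundTripFactor S xstar A z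
      = A * ((S.psi z / S.psi xstar) * (S.phi xstar / S.phi z)) := mul_assoc _ _ _
    _ ≤ A := mul_le_of_le_one_right hA0 (mul_le_one₀ hv1 hq0.le hq1)

lemma tendsto_roundTripFactor : Tendsto (roundTripFactor S xstar A) (fromRight S.a) (𝓝 0) := by
  have hψ : Tendsto (fun z => A / S.psi xstar * S.psi z) (fromRight S.a) (𝓝 0) := by
    simpa using S.psi_lim_a.const_mul (A / S.psi xstar)
  have hφ : Tendsto (fun z => S.phi xstar / S.phi z) (fromRight S.a) (𝓝 0) :=
    tendsto_const_nhds.div_atTop S.phi_lim_a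
  have := hψ.mul hφ
  rw [mul_zero] at this
  refine this.congr fun z => ?_
  unfold roundTripFactor
  ring

lemma yObj_denom_eq (hx : xstar ∈ S.I) {z : ℝ} (hzI : z ∈ S.I) :
    S.phi z / S.phi xstar - A * (S.psi z / S.psi xstar)
      = S.phi z / S.phi xstar * (1 - roundTripFactor S xstar A z) := by
  have := S.phi_pos hzI.1 hzI.2
  have := S.phi_pos hx.1 hx.2
  unfold roundTripFactor
  field_simp

lemma yObj_denom_pos (hx : xstar ∈ S.I) (hA0 : 0 ≤ A) (hA1 : A < 1) {z : ℝ} (hz : S.a < z)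
    (hzx : z ≤ xstar) : 0 < S.phi z / S.phi xstar - A * (S.psi z / S.psi xstar) := by
  have hzI := S.mem_I_of_le hx hz hzx
  rw [yObj_denom_eq hx hzI]
  have := (roundTripFactor_mem_Icc hx hA0 hz hzx).2
  have := S.phi_pos hzI.1 hzI.2
  have := S.phi_pos hx.1 hx.2
  exact mul_pos (by positivity) (by linarith)

lemma hpay_mul_phi_div_eq (hx : xstar ∈ S.I) (hA0 : 0 ≤ A) (hA1 : A < 1) {z : ℝ} (hz : S.a < z)
    (hzx : z < xstar) :
    hpay S pc Kc xstar z * (S.phi xstar / S.phi z)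
      = yObj S pc Kc xstar A z * (1 - roundTripFactor S xstar A z) := by
  have hzI := S.mem_I_of_le hx hz hzx.le
  have hd := yObj_denom_pos hx hA0 hA1 hz hzx.le
  rw [yObj_denom_eq hx hzI] at hd
  have := S.phi_pos hzI.1 hzI.2
  have := S.phi_pos hx.1 hx.2
  have h1 : 1 - roundTripFactor S xstar A z ≠ 0 := (pos_of_mul_pos_right hd (by positivity)).ne'
  rw [yObj, yObj_denom_eq hx hzI, hpay, if_pos hzx]
  field_simp

lemma yObj_xstar_neg (hx : xstar ∈ S.I) (hA1 : A < 1) (hS2 : pc + Kc < xstar) :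
    yObj S pc Kc xstar A xstar < 0 := by
  have := S.psi_pos hx.1 hx.2
  have := S.phi_pos hx.1 hx.2
  rw [yObj, div_self (by positivity), div_self (by positivity)]
  exact div_neg_of_neg_of_pos (by linarith) (by linarith)

lemma continuousOn_yObj (hx : xstar ∈ S.I) (hA0 : 0 ≤ A) (hA1 : A < 1) :
    ContinuousOn (yObj S pc Kc xstar A) {z : ℝ | S.a < z ∧ z ≤ xstar} := by
  have hsub : {z : ℝ | S.a < z ∧ z ≤ xstar} ⊆ S.I := fun z hz => S.mem_I_of_le hx hz.1 hz.2
  have hψ := (S.psi_cont.mono hsub).div_const (S.psi xstar)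
  have hφ := (S.phi_cont.mono hsub).div_const (S.phi xstar)
  exact ((continuousOn_neg.add continuousOn_const).add (continuousOn_const.mul hψ)).div
    (hφ.sub (continuousOn_const.mul hψ)) fun z hz => (yObj_denom_pos hx hA0 hA1 hz.1 hz.2).ne'

lemma ThatIter_succ (n : ℕ) :
    ThatIter S pc Kc xstar A (n + 1) = That S pc Kc xstar A (ThatIter S pc Kc xstar A n) :=
  Function.iterate_succ_apply' _ _ _

lemma coe_le_hhat_of_lt (hA0 : 0 ≤ A) {ζ : ℝ → EReal} {t : ℝ} (ht : (t : EReal) ≤ ζ xstar)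
    {z : ℝ} (hzI : z ∈ S.I) (hx : xstar ∈ S.I) (hzx : z < xstar) :
    ((-z + pc + S.psi z / S.psi xstar * (Kc + A * t) : ℝ) : EReal)
      ≤ hhat S pc Kc xstar A ζ z := by
  have hv := (S.psi_div_mem_Ioc hzI hx hzx.le).1.le
  rw [hhat, if_pos hzx, EReal.coe_add (-z + pc), EReal.coe_mul, EReal.coe_add Kc,
    EReal.coe_mul A]
  gcongr

/-- Stopping at `τ_z` turns a lower bound `t` on the continuation value at `x*` into the
lower bound `y(z)(1 - w(z)) + w(z) t`, whose fixed point is `y(z)`. -/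
lemma yObj_affine_le_That (hx : xstar ∈ S.I) (hA0 : 0 ≤ A) (hA1 : A < 1) {z : ℝ}
    (hz : S.a < z) (hzx : z < xstar) {ζ : ℝ → EReal} {t : ℝ} (ht : (t : EReal) ≤ ζ xstar) :
    ((yObj S pc Kc xstar A z * (1 - roundTripFactor S xstar A z)
        + roundTripFactor S xstar A z * t : ℝ) : EReal)
      ≤ That S pc Kc xstar A ζ xstar := by
  have hzI := S.mem_I_of_le hx hz hzx.le
  have hq := (S.phi_div_mem_Ioc hzI hx hzx.le).1.le
  have hreal : yObj S pc Kc xstar A z * (1 - roundTripFactor S xstar A z)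
        + roundTripFactor S xstar A z * t
      = (-z + pc + S.psi z / S.psi xstar * (Kc + A * t)) * (S.phi xstar / S.phi z) := by
    rw [← hpay_mul_phi_div_eq hx hA0 hA1 hz hzx, hpay, if_pos hzx, roundTripFactor]
    ring
  calc _ = ((-z + pc + S.psi z / S.psi xstar * (Kc + A * t) : ℝ) : EReal)
          * ((S.phi xstar / S.phi z : ℝ) : EReal) := by rw [hreal, EReal.coe_mul]
    _ ≤ hhat S pc Kc xstar A ζ z * ((S.phi xstar / S.phi z : ℝ) : EReal) :=
        mul_le_mul_of_nonneg_right (coe_le_hhat_of_lt hA0 ht hzI hx hzx) (EReal.coe_nonneg.mpr hq)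
    _ ≤ That S pc Kc xstar A ζ xstar := S.mul_phi_div_le_val _ hz hx.2 hzx.le

lemma yObj_le_Vhat (hx : xstar ∈ S.I) (hA0 : 0 ≤ A) (hA1 : A < 1) {z : ℝ} (hz : S.a < z)
    (hzx : z < xstar) : (yObj S pc Kc xstar A z : EReal) ≤ Vhat S pc Kc xstar A xstar := by
  set y := yObj S pc Kc xstar A z
  set w := roundTripFactor S xstar A z
  have hw := roundTripFactor_mem_Icc hx hA0 hz hzx.le
  have hiter : ∀ n : ℕ, ((y * (1 - w ^ n) : ℝ) : EReal) ≤ ThatIter S pc Kc xstar A n xstar := by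
    intro n
    induction n with
    | zero => simp [ThatIter]
    | succ n ih =>
      rw [ThatIter_succ]
      convert yObj_affine_le_That hx hA0 hA1 hz hzx ih using 3
      ring
  have hlim : Tendsto (fun n : ℕ => y * (1 - w ^ n)) atTop (𝓝 y) := by
    simpa using ((tendsto_pow_atTop_nhds_zero_of_lt_one hw.1 (hw.2.trans_lt hA1)).const_sub 1)
      |>.const_mul y
  exact le_of_tendsto ((continuous_coe_real_ereal.tendsto y).comp hlim)
    (Eventually.of_forall fun n =>
      (hiter n).trans (le_iSup (fun m => ThatIter S pc Kc xstar A m xstar) n))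

lemma hhat_le_mul_phi (hx : xstar ∈ S.I) (hA0 : 0 ≤ A) (hA1 : A < 1) (hS2 : pc + Kc < xstar)
    {σ : ℝ} (hσ : 0 ≤ σ) (hy : ∀ z : ℝ, S.a < z → z < xstar → yObj S pc Kc xstar A z ≤ σ)
    {ζ : ℝ → EReal} (hζ : ∀ s ∈ S.I, ζ s ≤ ((σ / S.phi xstar * S.phi s : ℝ) : EReal))
    {s : ℝ} (hs : s ∈ S.I) :
    hhat S pc Kc xstar A ζ s ≤ ((σ / S.phi xstar * S.phi s : ℝ) : EReal) := by
  have hφx := S.phi_pos hx.1 hx.2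
  have hφs := S.phi_pos hs.1 hs.2
  rw [hhat]
  split_ifs with hsx
  · have hv := (S.psi_div_mem_Ioc hs hx hsx.le).1.le
    have hζx : ζ xstar ≤ (σ : EReal) := by
      simpa [div_mul_cancel₀ σ hφx.ne'] using hζ xstar hx
    have hnum := (div_le_iff₀ (yObj_denom_pos hx hA0 hA1 hs.1 hsx.le)).mp (hy s hs.1 hsx)
    have hreal : -s + pc + S.psi s / S.psi xstar * (Kc + A * σ) ≤ σ / S.phi xstar * S.phi s := by
      linear_combination hnum
    calc ((-s + pc : ℝ) : EReal) + ((S.psi s / S.psi xstar : ℝ) : EReal) * (Kc + A * ζ xstar)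
        ≤ ((-s + pc : ℝ) : EReal) + ((S.psi s / S.psi xstar : ℝ) : EReal) * (Kc + A * σ) := by
          gcongr
      _ = ((-s + pc + S.psi s / S.psi xstar * (Kc + A * σ) : ℝ) : EReal) := by norm_cast
      _ ≤ _ := EReal.coe_le_coe_iff.mpr hreal
  · have hreal : -s + pc + Kc + A * (σ / S.phi xstar * S.phi s) ≤ σ / S.phi xstar * S.phi s := by
      have hAX := mul_le_of_le_one_left (a := A) (by positivity : 0 ≤ σ / S.phi xstar * S.phi s)
        hA1.le
      linarith [not_lt.mp hsx]
    calc ((-s + pc + Kc : ℝ) : EReal) + A * ζ s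
        ≤ ((-s + pc + Kc : ℝ) : EReal) + A * ((σ / S.phi xstar * S.phi s : ℝ) : EReal) := by
          gcongr
          exact hζ s hs
      _ = ((-s + pc + Kc + A * (σ / S.phi xstar * S.phi s) : ℝ) : EReal) := by norm_cast
      _ ≤ _ := EReal.coe_le_coe_iff.mpr hreal

lemma Vhat_le (hx : xstar ∈ S.I) (hA0 : 0 ≤ A) (hA1 : A < 1) (hS2 : pc + Kc < xstar)
    {σ : ℝ} (hσ : 0 ≤ σ) (hy : ∀ z : ℝ, S.a < z → z < xstar → yObj S pc Kc xstar A z ≤ σ) :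
    Vhat S pc Kc xstar A xstar ≤ σ := by
  have hφx := S.phi_pos hx.1 hx.2
  have hiter : ∀ n : ℕ, ∀ x ∈ S.I,
      ThatIter S pc Kc xstar A n x ≤ ((σ / S.phi xstar * S.phi x : ℝ) : EReal) := by
    intro n
    induction n with
    | zero =>
      intro x hxI
      have := S.phi_pos hxI.1 hxI.2
      exact EReal.coe_nonneg.mpr (by positivity)
    | succ n ih =>
      intro x hxI
      rw [ThatIter_succ]
      exact S.val_le_mul_phi (by positivity)
        (fun s hs => hhat_le_mul_phi hx hA0 hA1 hS2 hσ hy ih hs) hxI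
  refine iSup_le fun n => ?_
  simpa [div_mul_cancel₀ σ hφx.ne'] using hiter n xstar hx

lemma exists_lt_yObj_of_lt_Vhat (hx : xstar ∈ S.I) (hA0 : 0 ≤ A) (hA1 : A < 1)
    (hS2 : pc + Kc < xstar) {r : ℝ} (hr : 0 ≤ r) (hrV : (r : EReal) < Vhat S pc Kc xstar A xstar) :
    ∃ z : ℝ, S.a < z ∧ z < xstar ∧ r < yObj S pc Kc xstar A z := by
  by_contra! h
  exact (Vhat_le hx hA0 hA1 hS2 hr h).not_gt hrV

/-- Near `a` the round-trip factor vanishes, so there `y` is bounded by the single option value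
`V_c(x*) ≥ y(z)(1 - w(z))` up to an arbitrarily small relative error. -/
lemma eventually_yObj_le (hx : xstar ∈ S.I) (hA0 : 0 ≤ A) (hA1 : A < 1) {r r' : ℝ}
    (hr : 0 < r) (hrr' : r < r') (hVc : S.val (toE (hpay S pc Kc xstar)) xstar ≤ r) :
    ∀ᶠ z in fromRight S.a, yObj S pc Kc xstar A z ≤ r' := by
  have hr' : 0 < r' := hr.trans hrr'
  have hδ : 0 < 1 - r / r' := sub_pos.mpr ((div_lt_one hr').mpr hrr')
  filter_upwards [eventually_mem_Ioo_fromRight hx.1,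
    tendsto_roundTripFactor.eventually_lt_const hδ] with z ⟨hz, hzx⟩ hw
  by_contra! hyz
  have hVz := (S.mul_phi_div_le_val (toE (hpay S pc Kc xstar)) hz hx.2 hzx.le).trans hVc
  rw [toE, ← EReal.coe_mul, EReal.coe_le_coe_iff, hpay_mul_phi_div_eq hx hA0 hA1 hz hzx] at hVz
  refine hVz.not_gt ?_
  calc r = r' * (r / r') := by field_simp
    _ < yObj S pc Kc xstar A z * (1 - roundTripFactor S xstar A z) := by
      gcongr
      exact lt_sub_comm.mp hw

end LifetimeValue

theorem lifetime_value_at_xstar_general (S : Setup) (pc Kc xstar A : ℝ)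
    (hxstar : xstar ∈ S.I)
    (hA0 : 0 < A) (hA1 : A < 1)
    (hS2 : pc + Kc < xstar)
    (hreg : regimeAlpha S pc Kc xstar A) :
    ∃ z0 : ℝ, S.a < (z0 : EReal) ∧ z0 < xstar ∧
      (∀ z : ℝ, S.a < (z : EReal) → z < xstar →
        yObj S pc Kc xstar A z ≤ yObj S pc Kc xstar A z0) ∧
      Vhat S pc Kc xstar A xstar = ((yObj S pc Kc xstar A z0 : ℝ) : EReal) := by
  obtain ⟨r, hVr, hrV⟩ := EReal.lt_iff_exists_real_btwn.mp (hreg xstar hxstar le_rfl)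
  have hr : 0 < r := EReal.coe_pos.mp ((S.val_nonneg _ _).trans_lt hVr)
  obtain ⟨r', hrr', hr'V⟩ := EReal.lt_iff_exists_real_btwn.mp hrV
  have hrr' : r < r' := EReal.coe_lt_coe_iff.mp hrr'
  obtain ⟨z', hz', hz'x, hrz'⟩ :=
    exists_lt_yObj_of_lt_Vhat hxstar hA0.le hA1 hS2 (hr.trans hrr').le hr'V
  obtain ⟨z₀, ⟨hz₀, hz₀x⟩, hmax⟩ := exists_isMaxOn_of_eventually_le_fromRight
    (continuousOn_yObj hxstar hA0.le hA1) (eventually_yObj_le hxstar hA0.le hA1 hr hrr' hVr.le)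
    hz' hz'x.le hrz'
  have hyz₀ : r' < yObj S pc Kc xstar A z₀ := hrz'.trans_le (isMaxOn_iff.mp hmax z' ⟨hz', hz'x.le⟩)
  have hz₀x : z₀ < xstar := hz₀x.lt_of_ne fun h => by
    linarith [yObj_xstar_neg hxstar hA1 hS2 (pc := pc) (Kc := Kc), h ▸ hyz₀]
  have hy : ∀ z : ℝ, S.a < z → z < xstar → yObj S pc Kc xstar A z ≤ yObj S pc Kc xstar A z₀ :=
    fun z hz hzx => isMaxOn_iff.mp hmax z ⟨hz, hzx.le⟩
  refine ⟨z₀, hz₀, hz₀x, hy, le_antisymm ?_ (yObj_le_Vhat hxstar hA0.le hA1 hz₀ hz₀x)⟩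
  exact Vhat_le hxstar hA0.le hA1 hS2 (by linarith) hy

/-- Lemma 11 of the paper: in regime (α),
`V̂(x*) = max_{z ∈ (a,x*)} y(z)`. -/
theorem lifetime_value_at_xstar (S : Setup) (pc Kc xstar A : ℝ)
    (hpc : 0 ≤ pc) (hKc : 0 ≤ Kc) (hxstar : xstar ∈ S.I)
    (hA0 : 0 < A) (hA1 : A < 1)
    (hS1 : ∃ x ∈ S.I, 0 < hpay S pc Kc xstar x)
    (hS2 : pc + Kc < xstar)
    (hreg : regimeAlpha S pc Kc xstar A) :
    ∃ z0 : ℝ, S.a < (z0 : EReal) ∧ z0 < xstar ∧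
      (∀ z : ℝ, S.a < (z : EReal) → z < xstar →
        yObj S pc Kc xstar A z ≤ yObj S pc Kc xstar A z0) ∧
      Vhat S pc Kc xstar A xstar = ((yObj S pc Kc xstar A z0 : ℝ) : EReal) :=
  lifetime_value_at_xstar_general S pc Kc xstar A hxstar hA0 hA1 hS2 hreg

end
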